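/- When defined, the precision meet of gradual types satisfies γ(G1 ⊓ G2) = γ(G1) ∩ γ(G2); that is, the syntactic meet exactly abstracts the intersection of concretizations. -/
import Mathlib


inductive GType : Type
  | int
  | bool
  | unk
  | arrow (a b : GType)
deriving DecidableEq

/-- Consistency on gradual types. -/
inductive Consist : GType → GType → Prop
  | unkL (G : GType) : Consist GType.unk G
  | unkR (G : GType) : Consist G GType.unk
  | int : Consist GType.int GType.int
  | bool : Consist GType.bool GType.bool
  | arrow {a a' b b' : GType} : Consist a a' → Consist b b' →
      Consist (GType.arrow a b) (GType.arrow a' b')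

inductive SType : Type
  | int
  | bool
  | arrow (a b : SType)
deriving DecidableEq

/-- Concretization of gradual types to sets of static types. -/
def gamma : GType → Set SType
  | GType.int => {SType.int}
  | GType.bool => {SType.bool}
  | GType.unk => Set.univ
  | GType.arrow a b => {T | ∃ T1 ∈ gamma a, ∃ T2 ∈ gamma b, T = SType.arrow T1 T2}

/-- Partial precision meet on gradual types. -/
def gmeet : GType → GType → Option GType
  | g, GType.unk => some g
  | GType.unk, g => some g
  | GType.int, GType.int => some GType.int
  | GType.bool, GType.bool => some GType.bool
  | GType.arrow a b, GType.arrow a' b' =>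
      match gmeet a a', gmeet b b' with
      | some x, some y => some (GType.arrow x y)
      | _, _ => none
  | _, _ => none

/-- The meet exactly abstracts the intersection of concretizations. -/
theorem gamma_meet :
    ∀ G1 G2 G : GType, gmeet G1 G2 = some G → gamma G = gamma G1 ∩ gamma G2 := by
  intro G1
  induction G1 with
  | int =>
    intro G2 G h
    cases G2 <;> simp [gmeet] at h <;> subst h <;> simp [gamma]
  | bool =>
    intro G2 G h
    cases G2 <;> simp [gmeet] at h <;> subst h <;> simp [gamma]
  | unk =>
    intro G2 G h
    cases G2 <;> simp [gmeet] at h <;> subst h <;> simp [gamma]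
  | arrow a b iha ihb =>
    intro G2 G h
    cases G2 with
    | unk => simp [gmeet] at h; subst h; simp [gamma]
    | int => simp [gmeet] at h
    | bool => simp [gmeet] at h
    | arrow a' b' =>
      simp only [gmeet] at h
      cases hx : gmeet a a' with
      | none => rw [hx] at h; simp at h
      | some x =>
        cases hy : gmeet b b' with
        | none => rw [hx, hy] at h; simp at h
        | some y =>
          rw [hx, hy] at h
          simp at h
          subst h
          have h1 := iha a' x hx
          have h2 := ihb b' y hy
          ext T
          simp [gamma, h1, h2]
          constructor
          · rintro ⟨T1, ⟨ha1, ha2⟩, T2, ⟨hb1, hb2⟩, rfl⟩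
            exact ⟨⟨T1, ha1, T2, hb1, rfl⟩, ⟨T1, ha2, T2, hb2, rfl⟩⟩
          · rintro ⟨⟨T1, ha1, T2, hb1, rfl⟩, ⟨T1', ha2, T2', hb2, heq⟩⟩
            cases heq
            exact ⟨T1, ⟨ha1, ha2⟩, T2, ⟨hb1, hb2⟩, rfl⟩
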